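/- For every z in the open unit disk 𝔻, the operator identity S_{φ_z}* S_{φ_z} = I − (U k_{z̄}) ⊗ (U k_{z̄}) holds on [H²]^⊥, where S_φ* = S_{φ̄}; equivalently, S_{φ̄_z} S_{φ_z} = I − (U k_{z̄}) ⊗ (U k_{z̄}). -/

import Mathlib

open MeasureTheory Filter Topology ComplexConjugate ENNReal

noncomputable section

namespace HTTO

instance fact2pi : Fact (0 < 2 * Real.pi) := ⟨Real.two_pi_pos⟩

/-- The unit circle, modeled additively as `ℝ / 2πℤ`; the point `x` corresponds to `e^{ix}`. -/
abbrev Circ : Type := AddCircle (2 * Real.pi)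

/-- Normalized Haar (Lebesgue) measure on the circle. -/
abbrev hm : Measure Circ := AddCircle.haarAddCircle

/-- The Lebesgue space `L²` of the circle. -/
abbrev L2 : Type := Lp ℂ 2 hm

/-- The Lebesgue space `L^∞` of the circle. -/
abbrev Linf : Type := Lp ℂ ⊤ hm

/-- The `n`-th Fourier coefficient, as a continuous linear functional on `L²`. -/
def coeffCLM (n : ℤ) : L2 →L[ℂ] ℂ :=
  LinearMap.mkContinuous
    { toFun := fun f => fourierBasis.repr f n
      map_add' := fun f g => by simp
      map_smul' := fun c f => by simp }
    1
    (fun f => by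
      rw [one_mul]
      calc ‖fourierBasis.repr f n‖ ≤ ‖fourierBasis.repr f‖ :=
            lp.norm_apply_le_norm (by norm_num) _ n
        _ = ‖f‖ := by simp)

/-- The Hardy space `H²`: the subspace of `L²` of functions whose negative Fourier
coefficients vanish. -/
def H2 : Submodule ℂ L2 := ⨅ n : {m : ℤ // m < 0}, LinearMap.ker (coeffCLM n.1 : L2 →ₗ[ℂ] ℂ)

theorem isClosed_H2 : IsClosed (H2 : Set L2) := by
  have h : ((H2 : Submodule ℂ L2) : Set L2)
      = ⋂ n : {m : ℤ // m < 0}, ↑(LinearMap.ker (coeffCLM n.1 : L2 →ₗ[ℂ] ℂ)) := Submodule.coe_iInf _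
  rw [h]
  exact isClosed_iInter fun n => ContinuousLinearMap.isClosed_ker _

instance : CompleteSpace H2 := isClosed_H2.completeSpace_coe

/-- The orthogonal (Szegő/Riesz) projection `P` of `L²` onto `H²`,
as an endomorphism of `L²`. -/
def Pp : L2 →L[ℂ] L2 := H2.subtypeL.comp (H2.orthogonalProjectionOnto)

/-- The `L²` function `f * g`, for `f ∈ L^∞` and `g ∈ L²`, is in `L²`. -/
theorem mulMem (f : Linf) (g : L2) : MemLp (⇑f • ⇑g) 2 hm :=
  (Lp.memLp g).smul (Lp.memLp f)

/-- Pointwise multiplication `g ↦ f g` of an `L²` function by an `L^∞` function. -/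
def mulFun (f : Linf) (g : L2) : L2 := (mulMem f g).toLp (⇑f • ⇑g)

theorem coeFn_mulFun (f : Linf) (g : L2) : mulFun f g =ᵐ[hm] ⇑f • ⇑g :=
  MemLp.coeFn_toLp _

theorem mulFun_add (f : Linf) (g₁ g₂ : L2) :
    mulFun f (g₁ + g₂) = mulFun f g₁ + mulFun f g₂ := by
  apply Lp.ext
  filter_upwards [coeFn_mulFun f (g₁ + g₂), coeFn_mulFun f g₁, coeFn_mulFun f g₂,
    Lp.coeFn_add (mulFun f g₁) (mulFun f g₂), Lp.coeFn_add g₁ g₂] with x h1 h2 h3 h4 h5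
  simp only [h1, h4, Pi.add_apply, h2, h3, Pi.smul_apply, h5, smul_eq_mul, Pi.mul_apply, mul_add]

theorem mulFun_smul (f : Linf) (c : ℂ) (g : L2) :
    mulFun f (c • g) = c • mulFun f g := by
  apply Lp.ext
  filter_upwards [coeFn_mulFun f (c • g), coeFn_mulFun f g,
    Lp.coeFn_smul c (mulFun f g), Lp.coeFn_smul c g] with x h1 h2 h3 h4
  simp only [h1, h3, Pi.smul_apply, h2, h4, smul_eq_mul, Pi.mul_apply]
  ring

theorem mulFun_norm (f : Linf) (g : L2) : ‖mulFun f g‖ ≤ ‖f‖ * ‖g‖ := by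
  rw [mulFun, Lp.norm_toLp]
  calc (eLpNorm (⇑f • ⇑g) 2 hm).toReal
      ≤ (eLpNorm (⇑f) ⊤ hm * eLpNorm (⇑g) 2 hm).toReal :=
        ENNReal.toReal_mono
          (ENNReal.mul_ne_top (Lp.eLpNorm_ne_top f) (Lp.eLpNorm_ne_top g))
          (eLpNorm_smul_le_eLpNorm_top_mul_eLpNorm 2 (Lp.aestronglyMeasurable g) ⇑f)
    _ = ‖f‖ * ‖g‖ := by rw [ENNReal.toReal_mul]; rfl

/-- The multiplication operator `M_f : L² → L²`, `g ↦ f g`, for a symbol `f ∈ L^∞`. -/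
def mulCL (f : Linf) : L2 →L[ℂ] L2 :=
  LinearMap.mkContinuous
    { toFun := mulFun f
      map_add' := mulFun_add f
      map_smul' := mulFun_smul f }
    ‖f‖ (mulFun_norm f)

/-- The product of two `L^∞` functions, as an element of `L^∞`. -/
def mulInf (f g : Linf) : Linf :=
  ((Lp.memLp g).smul (r := ⊤) (Lp.memLp f)).toLp (⇑f • ⇑g)

/-- The complex conjugate of an `Lᵖ` function. -/
def conjLp {p : ℝ≥0∞} (f : Lp ℂ p hm) : Lp ℂ p hm :=
  MemLp.toLp (fun x => conj (f x))
    (MemLp.of_le (Lp.memLp f)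
      (RCLike.continuous_conj.comp_aestronglyMeasurable (Lp.aestronglyMeasurable f))
      (Eventually.of_forall fun x => by simp))

/-- The embedding of `L^∞` into `L²` (the measure is finite). -/
def inclL2 (f : Linf) : L2 := MemLp.toLp ⇑f ((Lp.memLp f).mono_exponent le_top)

/-- The constant function `1` in `L^∞`. -/
def oneInf : Linf := Lp.const ⊤ hm (1 : ℂ)

/-- The constant function `1` in `L²`. -/
def oneL2 : L2 := Lp.const 2 hm (1 : ℂ)

/-- `f ∈ L^∞` is constant (a.e.). -/
def IsConst (f : Linf) : Prop := ∃ c : ℂ, f = Lp.const ⊤ hm c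

/-- `θ ∈ L^∞` is an inner function: it is analytic (i.e. lies in `H^∞ = H² ∩ L^∞`)
and has modulus `1` a.e. on the circle. -/
structure IsInner (θ : Linf) : Prop where
  analytic : inclL2 θ ∈ H2
  unimodular : ∀ᵐ x ∂hm, ‖θ x‖ = 1

/-- The complementary projection `I - P` of `L²` onto `[H²]^⊥`. -/
def Qm : L2 →L[ℂ] L2 := ContinuousLinearMap.id ℂ L2 - Pp

/-- The Toeplitz operator `T_f h = P (f h)` with symbol `f ∈ L^∞`, realized as the
endomorphism `P M_f P` of `L²` (i.e. extended by zero on `[H²]^⊥`). -/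
def toep (f : Linf) : L2 →L[ℂ] L2 := Pp ∘L mulCL f ∘L Pp

/-- The Hankel operator `H_f h = (I - P)(f h)` with symbol `f ∈ L^∞`, realized as the
operator `(I-P) M_f P` on `L²` (i.e. extended by zero on `[H²]^⊥`). -/
def hank (f : Linf) : L2 →L[ℂ] L2 := Qm ∘L mulCL f ∘L Pp

/-- The operator `S_f h = (I - P)(f h)` on `[H²]^⊥` with symbol `f ∈ L^∞`, realized as
`(I-P) M_f (I-P)` on `L²` (i.e. extended by zero on `H²`). -/
def sop (f : Linf) : L2 →L[ℂ] L2 := Qm ∘L mulCL f ∘L Qm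

/-- The rank one operator `x ⊗ y : h ↦ ⟨h, y⟩ x`. -/
def rankOne (x y : L2) : L2 →L[ℂ] L2 := (innerSL ℂ y).smulRight x

/-- The subspace `θ H²` of `L²`. -/
def thetaH2 (θ : Linf) : Submodule ℂ L2 := H2.map (mulCL θ).toLinearMap

/-- The model space `K_θ = H² ⊖ θH² = H² ∩ (θH²)^⊥`. -/
def Ktheta (θ : Linf) : Submodule ℂ L2 := H2 ⊓ (thetaH2 θ)ᗮ

/-- The orthogonal projection `P_θ` of `L²` onto the model space `K_θ`, given by the
formula `P_θ f = P f - θ P(conj θ · f)`. -/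
def Pth (θ : Linf) : L2 →L[ℂ] L2 := Pp - mulCL θ ∘L Pp ∘L mulCL (conjLp θ)

/-- The truncated Toeplitz operator `A^θ_φ u = P_θ(φ u)` with symbol `φ ∈ L²`, applied to a
bounded function `u` (in the statements, `u` ranges over `K_θ ∩ H^∞`). -/
def ttoepApply (θ : Linf) (φ : L2) (u : Linf) : L2 := Pth θ (mulCL u φ)

/-- The truncated Hankel operator `H^θ_φ u = (I - P_θ)(φ u)` with symbol `φ ∈ L²`, applied to
a bounded function `u` (in the statements, `u` ranges over `K_θ ∩ H^∞`). -/
def thankApply (θ : Linf) (φ : L2) (u : Linf) : L2 := mulCL u φ - Pth θ (mulCL u φ)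

/-- The truncated Toeplitz operator `A^θ_f = P_θ M_f P_θ` with bounded symbol `f ∈ L^∞`,
extended by zero on the orthogonal complement of `K_θ`. -/
def ttoep (θ f : Linf) : L2 →L[ℂ] L2 := Pth θ ∘L mulCL f ∘L Pth θ

/-- The truncated Hankel operator `H^θ_f = (I - P_θ) M_f P_θ` with bounded symbol `f ∈ L^∞`,
extended by zero on the orthogonal complement of `K_θ`. -/
def thank (θ f : Linf) : L2 →L[ℂ] L2 :=
  (ContinuousLinearMap.id ℂ L2 - Pth θ) ∘L mulCL f ∘L Pth θ

/-- The antiunitary operator `V` on `L²`: `(V f)(w) = conj w * conj (f w)`. -/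
def Vop (f : L2) : L2 := mulCL (fourierLp ⊤ (-1)) (conjLp f)

theorem negMP : MeasurePreserving (fun x : Circ => -x) hm hm :=
  Measure.measurePreserving_neg hm

/-- The unitary operator `U` on `L²`: `(U f)(w) = conj w * f (conj w)`. -/
def Uop (f : L2) : L2 :=
  mulCL (fourierLp ⊤ (-1)) (Lp.compMeasurePreserving (fun x : Circ => -x) negMP f)

/-- The normalized reproducing kernel `k_z(w) = √(1-|z|²) / (1 - conj z * w)` of `H²`,
as a continuous function on the circle (`w = e^{ix}`). -/
def kC (z : ℂ) (hz : ‖z‖ < 1) : C(Circ, ℂ) :=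
  ⟨fun x => (Real.sqrt (1 - ‖z‖ ^ 2) : ℂ) / (1 - conj z * fourier 1 x), by
    apply Continuous.div continuous_const
    · exact Continuous.sub continuous_const (Continuous.mul continuous_const (map_continuous _))
    · intro x
      refine sub_ne_zero.2 fun h => absurd (congrArg norm h) ?_
      have h1 : ‖fourier 1 x‖ = 1 := Circle.norm_coe _
      simp only [norm_mul, RCLike.norm_conj, h1, mul_one, norm_one]
      exact fun hc => absurd hc.symm (ne_of_lt hz)⟩

open Classical in
/-- The normalized reproducing kernel `k_z` as an element of `L²` (junk value `0` if `|z| ≥ 1`). -/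
def kLp (z : ℂ) : L2 :=
  if hz : ‖z‖ < 1 then ContinuousMap.toLp 2 hm ℂ (kC z hz) else 0

/-- The Möbius transform `φ_z(w) = (z - w)/(1 - conj z * w)`, as a continuous function. -/
def phiC (z : ℂ) (hz : ‖z‖ < 1) : C(Circ, ℂ) :=
  ⟨fun x => (z - fourier 1 x) / (1 - conj z * fourier 1 x), by
    apply Continuous.div
    · exact Continuous.sub continuous_const (map_continuous _)
    · exact Continuous.sub continuous_const (Continuous.mul continuous_const (map_continuous _))
    · intro x
      refine sub_ne_zero.2 fun h => absurd (congrArg norm h) ?_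
      have h1 : ‖fourier 1 x‖ = 1 := Circle.norm_coe _
      simp only [norm_mul, RCLike.norm_conj, h1, mul_one, norm_one]
      exact fun hc => absurd hc.symm (ne_of_lt hz)⟩

open Classical in
/-- The Möbius transform `φ_z` as an element of `L^∞` (junk value `0` if `|z| ≥ 1`). -/
def phiInf (z : ℂ) : Linf :=
  if hz : ‖z‖ < 1 then ContinuousMap.toLp ⊤ hm ℂ (phiC z hz) else 0

/-- The filter of tangential approach `|z| → 1⁻` inside the unit disk. -/
def toBoundary : Filter ℂ := Filter.comap (fun z => ‖z‖) (𝓝[<] (1 : ℝ))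

/-- Membership in `K_θ + ℂθ = {h ∈ H² : θ conj h ∈ H²}`. -/
def MemKC (θ : Linf) (h : L2) : Prop := h ∈ H2 ∧ mulCL θ (conjLp h) ∈ H2


section Aux19

local notation "⟪" x ", " y "⟫" => @inner ℂ _ _ x y

/-- shorthand for the Fourier basis vectors in L2 -/
abbrev eL (n : ℤ) : L2 := fourierLp 2 n

theorem mulCL_apply (f : Linf) (g : L2) : mulCL f g = mulFun f g := rfl

theorem inner_eL (n : ℤ) (f : L2) : ⟪eL n, f⟫ = fourierBasis.repr f n := by
  rw [HilbertBasis.repr_apply_apply, coe_fourierBasis]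

theorem mem_H2_iff {f : L2} : f ∈ H2 ↔ ∀ n : ℤ, n < 0 → fourierBasis.repr f n = 0 := by
  rw [H2, Submodule.mem_iInf]
  constructor
  · intro h n hn; exact h ⟨n, hn⟩
  · intro h n; exact h n.1 n.2

theorem mem_H2orth {f : L2} (h : ∀ n : ℤ, 0 ≤ n → fourierBasis.repr f n = 0) : f ∈ H2ᗮ := by
  rw [Submodule.mem_orthogonal]
  intro x hx
  have hs := fourierBasis.hasSum_inner_mul_inner x f
  have hzero : (fun i : ℤ => ⟪x, fourierBasis i⟫ * ⟪fourierBasis i, f⟫) = fun _ => 0 := by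
    funext i
    rcases lt_or_ge i 0 with hi | hi
    · have : ⟪fourierBasis i, x⟫ = 0 := by
        rw [coe_fourierBasis, inner_eL]; exact mem_H2_iff.1 hx i hi
      rw [← inner_conj_symm x, this, map_zero, zero_mul]
    · have : ⟪fourierBasis i, f⟫ = 0 := by
        rw [coe_fourierBasis, inner_eL]; exact h i hi
      rw [this, mul_zero]
  rw [hzero] at hs
  exact (hasSum_zero.unique hs).symm

theorem Pp_of_mem {f : L2} (hf : f ∈ H2) : Pp f = f := by
  have : H2.orthogonalProjectionOnto ((⟨f, hf⟩ : H2) : L2) = ⟨f, hf⟩ :=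
    Submodule.orthogonalProjectionOnto_mem_subspace_eq_self _
  simp only [Pp, ContinuousLinearMap.comp_apply, Submodule.subtypeL_apply]
  rw [this]

theorem Pp_of_orth {f : L2} (hf : f ∈ H2ᗮ) : Pp f = 0 := by
  simp only [Pp, ContinuousLinearMap.comp_apply, Submodule.subtypeL_apply]
  rw [Submodule.orthogonalProjectionOnto_apply_of_mem_orthogonal hf]
  rfl

theorem mem_orth_of_Pp_eq_zero {f : L2} (hf : Pp f = 0) : f ∈ H2ᗮ := by
  have := Submodule.sub_starProjection_mem_orthogonal (K := H2) f
  rw [Submodule.starProjection_apply] at this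
  simp only [Pp, ContinuousLinearMap.comp_apply, Submodule.subtypeL_apply] at hf
  rwa [hf, sub_zero] at this

theorem Pp_eq {f g : L2} (hg : g ∈ H2) (ho : f - g ∈ H2ᗮ) : Pp f = g := by
  have hf : f = g + (f - g) := by abel
  rw [hf, map_add, Pp_of_mem hg, Pp_of_orth ho, add_zero]

theorem Qm_apply (f : L2) : Qm f = f - Pp f := rfl

theorem inner_L2 (f g : L2) : ⟪f, g⟫ = ∫ x, conj (f x) * g x ∂hm := by
  rw [MeasureTheory.L2.inner_def]; simp only [RCLike.inner_apply']

theorem coeFn_conjLp' {p : ℝ≥0∞} (f : Lp ℂ p hm) :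
    conjLp f =ᵐ[hm] fun x => conj (f x) :=
  MemLp.coeFn_toLp _

theorem inner_mulFun_left (f : Linf) (x y : L2) :
    ⟪mulFun f x, y⟫ = ⟪x, mulFun (conjLp f) y⟫ := by
  rw [inner_L2, inner_L2]
  apply integral_congr_ae
  filter_upwards [coeFn_mulFun f x, coeFn_mulFun (conjLp f) y,
    coeFn_conjLp' f] with a h1 h2 h3'
  simp only [h1, h2, Pi.smul_apply, smul_eq_mul, h3', map_mul, RingHomCompTriple.comp_apply,
    RCLike.conj_conj, Pi.mul_apply]
  ring

end Aux19
section Aux19b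

local notation "⟪" x ", " y "⟫" => @inner ℂ _ _ x y

theorem adjoint_mulCL (f : Linf) :
    ContinuousLinearMap.adjoint (mulCL f) = mulCL (conjLp f) := by
  symm
  rw [ContinuousLinearMap.eq_adjoint_iff]
  intro x y
  show ⟪mulFun (conjLp f) x, y⟫ = ⟪x, mulFun f y⟫
  rw [inner_mulFun_left]
  congr 1
  apply Lp.ext
  filter_upwards [coeFn_mulFun (conjLp (conjLp f)) y, coeFn_mulFun f y,
    coeFn_conjLp' (conjLp f), coeFn_conjLp' f] with a h1 h2 h3 h4
  simp only [h1, h2, Pi.smul_apply, smul_eq_mul, Pi.mul_apply, h3, h4, RCLike.conj_conj]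

theorem Pp_selfAdjoint : ContinuousLinearMap.adjoint Pp = Pp :=
  (isSelfAdjoint_starProjection H2)

theorem Qm_selfAdjoint : ContinuousLinearMap.adjoint Qm = Qm := by
  rw [Qm, map_sub, Pp_selfAdjoint, ContinuousLinearMap.adjoint_id]

theorem adjoint_sop (f : Linf) :
    ContinuousLinearMap.adjoint (sop f) = sop (conjLp f) := by
  rw [sop, sop, ContinuousLinearMap.adjoint_comp, ContinuousLinearMap.adjoint_comp,
    adjoint_mulCL, Qm_selfAdjoint]
  rfl

/-- extracting Fourier coefficients from a `HasSum` representation -/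
theorem inner_eL_hasSum {c : ℕ → ℂ} {v : L2} {ι : ℕ → ℤ} 
    (h : HasSum (fun j => c j • eL (ι j)) v) (n : ℤ) :
    HasSum (fun j => if ι j = n then c j else 0) ⟪eL n, v⟫ := by
  have h2 := h.mapL (innerSL ℂ (eL n))
  convert h2 using 2 with j
  on_goal 1 => rfl
  rw [innerSL_apply_apply, inner_smul_right]
  have := orthonormal_iff_ite.1 (orthonormal_fourier (hT := fact2pi)) n (ι j)
  rw [this]
  by_cases hj : ι j = n
  · simp [hj]
  · simp [hj, Ne.symm hj]
  rfl

theorem inner_eL_hasSum_eq {c : ℕ → ℂ} {v : L2} {ι : ℕ → ℤ} (hι : Function.Injective ι)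
    (h : HasSum (fun j => c j • eL (ι j)) v) (j0 : ℕ) :
    ⟪eL (ι j0), v⟫ = c j0 := by
  have h1 := inner_eL_hasSum h (ι j0)
  have h2 : (fun j => if ι j = ι j0 then c j else 0) = fun j => if j = j0 then c j0 else 0 := by
    funext j
    by_cases hj : j = j0
    · subst hj; simp
    · rw [if_neg hj, if_neg (fun hc => hj (hι hc))]
  rw [h2] at h1
  exact h1.unique (hasSum_ite_eq j0 (c j0))

theorem inner_eL_hasSum_zero {c : ℕ → ℂ} {v : L2} {ι : ℕ → ℤ}
    (h : HasSum (fun j => c j • eL (ι j)) v) (n : ℤ) (hn : ∀ j, ι j ≠ n) :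
    ⟪eL n, v⟫ = 0 := by
  have h1 := inner_eL_hasSum h n
  have h2 : (fun j => if ι j = n then c j else 0) = fun _ => 0 := by
    funext j; rw [if_neg (hn j)]
  rw [h2] at h1
  exact h1.unique hasSum_zero

end Aux19b
section Aux19c

local notation "⟪" x ", " y "⟫" => @inner ℂ _ _ x y

theorem fourier_pow (j : ℕ) (x : Circ) : fourier (j : ℤ) x = (fourier 1 x : ℂ) ^ j := by
  induction j with
  | zero => simp [fourier_zero]
  | succ k ih =>
    push_cast
    rw [fourier_add, ih, pow_succ, mul_comm]

theorem fourier_neg_eq (j : ℤ) (x : Circ) : fourier j (-x) = (fourier (-j) x : ℂ) := by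
  rw [fourier_apply, fourier_apply]
  congr 1
  rw [zsmul_neg, neg_zsmul]

theorem fourier_mul_inv (x : Circ) : (fourier 1 x : ℂ) * fourier (-1) x = 1 := by
  rw [← fourier_add]
  norm_num [fourier_zero]

theorem denom_ne {a w : ℂ} (ha : ‖a‖ < 1) (hw : ‖w‖ = 1) : 1 - a * w ≠ 0 := by
  intro h
  have : (1 : ℂ) = a * w := by linear_combination h
  have := congrArg norm this
  rw [norm_one, norm_mul, hw, mul_one] at this
  exact absurd this.symm (ne_of_lt ha)

theorem norm_fourier_one (x : Circ) : ‖(fourier 1 x : ℂ)‖ = 1 := Circle.norm_coe _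

/-- summability helper: sums of the form `∑ c r^j • fourier (ι j)` in `C(Circ, ℂ)` -/
theorem summable_geom_fourier (c : ℂ) {r : ℂ} (hr : ‖r‖ < 1) (ι : ℕ → ℤ) :
    Summable (fun j : ℕ => (c * r ^ j) • (fourier (ι j) : C(Circ, ℂ))) := by
  apply Summable.of_norm
  have : (fun j : ℕ => ‖(c * r ^ j) • (fourier (ι j) : C(Circ, ℂ))‖)
      = fun j => ‖c‖ * ‖r‖ ^ j := by
    funext j
    rw [norm_smul, fourier_norm, mul_one, norm_mul, norm_pow]
  rw [this]
  exact (summable_geometric_of_lt_one (norm_nonneg r) hr).mul_left _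

theorem hasSum_kC (z : ℂ) (hz : ‖z‖ < 1) :
    HasSum (fun j : ℕ => (((Real.sqrt (1 - ‖z‖ ^ 2) : ℝ) : ℂ) * (conj z) ^ j)
      • (fourier (j : ℤ) : C(Circ, ℂ))) (kC z hz) := by
  set κ : ℂ := ((Real.sqrt (1 - ‖z‖ ^ 2) : ℝ) : ℂ)
  have hz' : ‖conj z‖ < 1 := by rwa [RCLike.norm_conj]
  have hsum := (summable_geom_fourier κ hz' (fun j : ℕ => (j : ℤ))).hasSum
  convert hsum using 1
  symm
  apply ContinuousMap.ext
  intro x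
  have hev := hsum.mapL (ContinuousMap.evalCLM (R := ℂ) x)
  have hgeo : HasSum (fun j : ℕ => κ * (conj z * fourier 1 x) ^ j)
      (κ * (1 - conj z * fourier 1 x)⁻¹) := by
    apply HasSum.mul_left
    apply hasSum_geometric_of_norm_lt_one
    rw [norm_mul, norm_fourier_one, mul_one]
    exact hz'
  have heq : (fun j : ℕ => (ContinuousMap.evalCLM (R := ℂ) x)
        ((κ * (conj z) ^ j) • (fourier (j : ℤ) : C(Circ, ℂ))))
      = fun j : ℕ => κ * (conj z * fourier 1 x) ^ j := by
    funext j
    rw [_root_.map_smul]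
    have hev' : (ContinuousMap.evalCLM (R := ℂ) x) ((fourier (j : ℤ) : C(Circ, ℂ)))
        = fourier (j : ℤ) x := rfl
    rw [hev', smul_eq_mul, mul_pow, fourier_pow]
    ring
  rw [heq] at hev
  have h5 := hgeo.unique hev
  have h6 : (∑' (b : ℕ), (κ * (conj z) ^ b) • (fourier (b : ℤ) : C(Circ, ℂ))) x
      = (ContinuousMap.evalCLM (R := ℂ) x)
        (∑' (b : ℕ), (κ * (conj z) ^ b) • (fourier (b : ℤ) : C(Circ, ℂ))) := rfl
  rw [h6, ← h5]
  show κ * (1 - conj z * fourier 1 x)⁻¹ = κ / (1 - conj z * fourier 1 x)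
  rw [div_eq_mul_inv]

theorem hasSum_kLp (z : ℂ) (hz : ‖z‖ < 1) :
    HasSum (fun j : ℕ => (((Real.sqrt (1 - ‖z‖ ^ 2) : ℝ) : ℂ) * (conj z) ^ j) • eL (j : ℤ))
      (kLp z) := by
  rw [kLp, dif_pos hz]
  have := (hasSum_kC z hz).mapL (ContinuousMap.toLp (E := ℂ) 2 hm ℂ)
  have heq : (fun j : ℕ => (((Real.sqrt (1 - ‖z‖ ^ 2) : ℝ) : ℂ) * (conj z) ^ j) • eL (j : ℤ))
      = fun j : ℕ => (ContinuousMap.toLp (E := ℂ) 2 hm ℂ)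
        ((((Real.sqrt (1 - ‖z‖ ^ 2) : ℝ) : ℂ) * (conj z) ^ j)
          • (fourier (j : ℤ) : C(Circ, ℂ))) := by
    funext j
    rw [_root_.map_smul]
  rw [heq]
  exact this

end Aux19c
section Aux19d

local notation "⟪" x ", " y "⟫" => @inner ℂ _ _ x y

theorem inner_eL_kLp (z : ℂ) (hz : ‖z‖ < 1) (n : ℕ) :
    ⟪eL (n : ℤ), kLp z⟫ = ((Real.sqrt (1 - ‖z‖ ^ 2) : ℝ) : ℂ) * (conj z) ^ n :=
  inner_eL_hasSum_eq (fun _ _ h => Int.ofNat.inj h) (hasSum_kLp z hz) n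

theorem inner_eL_kLp_neg (z : ℂ) (hz : ‖z‖ < 1) (n : ℤ) (hn : n < 0) :
    ⟪eL n, kLp z⟫ = 0 :=
  inner_eL_hasSum_zero (hasSum_kLp z hz) n (fun j h => by omega)

theorem kLp_mem_H2 (z : ℂ) (hz : ‖z‖ < 1) : kLp z ∈ H2 := by
  rw [mem_H2_iff]
  intro n hn
  rw [← inner_eL]
  exact inner_eL_kLp_neg z hz n hn

/-- The Möbius transform as an element of `L²`. -/
def pL2 (z : ℂ) (hz : ‖z‖ < 1) : L2 := ContinuousMap.toLp 2 hm ℂ (phiC z hz)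

theorem coeFn_pL2 (z : ℂ) (hz : ‖z‖ < 1) : pL2 z hz =ᵐ[hm] ⇑(phiC z hz) :=
  ContinuousMap.coeFn_toLp _ _

theorem coeFn_phiInf (z : ℂ) (hz : ‖z‖ < 1) : phiInf z =ᵐ[hm] ⇑(phiC z hz) := by
  rw [phiInf, dif_pos hz]
  exact ContinuousMap.coeFn_toLp _ _

theorem norm_sq_cast (z : ℂ) : ((‖z‖ ^ 2 : ℝ) : ℂ) = conj z * z := by
  rw [RCLike.conj_mul]
  norm_cast

theorem hasSum_phiC (z : ℂ) (hz : ‖z‖ < 1) :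
    HasSum (fun j : ℕ => (-(((1 - ‖z‖ ^ 2 : ℝ)) : ℂ) * (conj z) ^ j)
      • (fourier ((j : ℤ) + 1) : C(Circ, ℂ)))
      (phiC z hz - z • fourier 0) := by
  set c : ℂ := -(((1 - ‖z‖ ^ 2 : ℝ)) : ℂ)
  have hz' : ‖conj z‖ < 1 := by rwa [RCLike.norm_conj]
  have hsum := (summable_geom_fourier c hz' (fun j : ℕ => (j : ℤ) + 1)).hasSum
  convert hsum using 1
  symm
  apply ContinuousMap.ext
  intro x
  have hev := hsum.mapL (ContinuousMap.evalCLM (R := ℂ) x)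
  have hne : (1 : ℂ) - conj z * fourier 1 x ≠ 0 := denom_ne hz' (norm_fourier_one x)
  have hgeo : HasSum (fun j : ℕ => (c * fourier 1 x) * (conj z * fourier 1 x) ^ j)
      ((c * fourier 1 x) * (1 - conj z * fourier 1 x)⁻¹) := by
    apply HasSum.mul_left
    apply hasSum_geometric_of_norm_lt_one
    rw [norm_mul, norm_fourier_one, mul_one]
    exact hz'
  have heq : (fun j : ℕ => (ContinuousMap.evalCLM (R := ℂ) x)
        ((c * (conj z) ^ j) • (fourier ((j : ℤ) + 1) : C(Circ, ℂ))))
      = fun j : ℕ => (c * fourier 1 x) * (conj z * fourier 1 x) ^ j := by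
    funext j
    rw [_root_.map_smul]
    have hev' : (ContinuousMap.evalCLM (R := ℂ) x) ((fourier ((j : ℤ) + 1) : C(Circ, ℂ)))
        = fourier ((j : ℤ) + 1) x := rfl
    rw [hev', smul_eq_mul, fourier_add, mul_pow, fourier_pow]
    ring
  rw [heq] at hev
  have h5 := hgeo.unique hev
  have h6 : (∑' (j : ℕ), (c * (conj z) ^ j) • (fourier ((j : ℤ) + 1) : C(Circ, ℂ))) x
      = (ContinuousMap.evalCLM (R := ℂ) x)
        (∑' (j : ℕ), (c * (conj z) ^ j) • (fourier ((j : ℤ) + 1) : C(Circ, ℂ))) := rfl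
  rw [ContinuousMap.sub_apply, ContinuousMap.smul_apply, h6, ← h5]
  show (c * fourier 1 x) * (1 - conj z * fourier 1 x)⁻¹
      = (z - fourier 1 x) / (1 - conj z * fourier 1 x) - z • fourier 0 x
  rw [fourier_zero, smul_eq_mul, mul_one]
  rw [div_sub' hne, eq_div_iff hne, mul_assoc, inv_mul_cancel₀ hne, mul_one]
  have hc : c = -(1 - conj z * z) := by
    rw [neg_inj, ← norm_sq_cast]
    push_cast
    ring
  rw [hc]
  ring

theorem hasSum_pL2 (z : ℂ) (hz : ‖z‖ < 1) :
    HasSum (fun j : ℕ => (-(((1 - ‖z‖ ^ 2 : ℝ)) : ℂ) * (conj z) ^ j) • eL ((j : ℤ) + 1))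
      (pL2 z hz - z • eL 0) := by
  have := (hasSum_phiC z hz).mapL (ContinuousMap.toLp (E := ℂ) 2 hm ℂ)
  have heq : (fun j : ℕ => (-(((1 - ‖z‖ ^ 2 : ℝ)) : ℂ) * (conj z) ^ j) • eL ((j : ℤ) + 1))
      = fun j : ℕ => (ContinuousMap.toLp (E := ℂ) 2 hm ℂ)
        ((-(((1 - ‖z‖ ^ 2 : ℝ)) : ℂ) * (conj z) ^ j) • (fourier ((j : ℤ) + 1) : C(Circ, ℂ))) := by
    funext j
    rw [_root_.map_smul]
  rw [heq]
  convert this using 1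
  rw [map_sub, _root_.map_smul]
  rfl

theorem inner_eL_pL2 (z : ℂ) (hz : ‖z‖ < 1) (k : ℤ) (hk : 1 ≤ k) :
    ⟪eL k, pL2 z hz⟫ = -(((1 - ‖z‖ ^ 2 : ℝ)) : ℂ) * (conj z) ^ ((k - 1).toNat) := by
  have h1 : ⟪eL k, pL2 z hz - z • eL 0⟫
      = -(((1 - ‖z‖ ^ 2 : ℝ)) : ℂ) * (conj z) ^ ((k - 1).toNat) := by
    have := inner_eL_hasSum_eq (ι := fun j : ℕ => (j : ℤ) + 1)
      (fun a b h => by exact_mod_cast add_right_cancel h) (hasSum_pL2 z hz) ((k - 1).toNat)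
    rwa [show (((k - 1).toNat : ℤ) + 1) = k by omega] at this
  have h2 : ⟪eL k, z • eL 0⟫ = 0 := by
    rw [inner_smul_right]
    have := orthonormal_iff_ite.1 (orthonormal_fourier (hT := fact2pi)) k 0
    rw [this, if_neg (by omega)]
    ring
  have := inner_sub_right (𝕜 := ℂ) (eL k) (pL2 z hz) (z • eL 0)
  rw [h2, sub_zero] at this
  rw [← this, h1]

end Aux19d
section Aux19e

local notation "⟪" x ", " y "⟫" => @inner ℂ _ _ x y

theorem ae_neg {g g' : Circ → ℂ} (h : g =ᵐ[hm] g') :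
    (fun x => g (-x)) =ᵐ[hm] fun x => g' (-x) :=
  negMP.quasiMeasurePreserving.ae_eq_comp h

theorem coeFn_Uop (f : L2) : Uop f =ᵐ[hm] fun x => fourier (-1) x * f (-x) := by
  rw [Uop]
  filter_upwards [coeFn_mulFun (fourierLp ⊤ (-1))
      (Lp.compMeasurePreserving (fun x : Circ => -x) negMP f),
    coeFn_fourierLp (T := 2 * Real.pi) ⊤ (-1),
    Lp.coeFn_compMeasurePreserving f negMP] with x h1 h2 h3
  refine Eq.trans h1 ?_
  rw [smul_eq_mul, Pi.mul_apply, h2, h3]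
  rfl

theorem Uop_smul (c : ℂ) (f : L2) : Uop (c • f) = c • Uop f := by
  apply Lp.ext
  filter_upwards [coeFn_Uop (c • f), coeFn_Uop f, Lp.coeFn_smul c (Uop f),
    ae_neg (Lp.coeFn_smul c f)] with x h1 h2 h3 h4
  simp only [h1, h3, h4, Pi.smul_apply, smul_eq_mul, h2]
  ring

/-- `Uop` as a continuous additive monoid hom, for summation purposes -/
def UopM : L2 →+ L2 :=
  ((mulCL (fourierLp ⊤ (-1))).toLinearMap.toAddMonoidHom).comp
    (Lp.compMeasurePreserving (fun x : Circ => -x) negMP)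

theorem UopM_apply (f : L2) : UopM f = Uop f := rfl

theorem UopM_continuous : Continuous UopM :=
  (mulCL (fourierLp ⊤ (-1))).continuous.comp
    (Lp.isometry_compMeasurePreserving negMP).continuous

theorem Uop_eL (j : ℤ) : Uop (eL j) = eL (-1 - j) := by
  apply Lp.ext
  filter_upwards [coeFn_Uop (eL j), coeFn_fourierLp (T := 2 * Real.pi) 2 (-1 - j),
    ae_neg (coeFn_fourierLp (T := 2 * Real.pi) 2 j)] with x h1 h2 h3
  rw [h1, h2, h3, fourier_neg_eq, show (-1 - j) = -1 + -j by ring, fourier_add]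

theorem hasSum_Uk (z : ℂ) (hz : ‖z‖ < 1) :
    HasSum (fun j : ℕ => (((Real.sqrt (1 - ‖z‖ ^ 2) : ℝ) : ℂ) * z ^ j) • eL (-1 - (j : ℤ)))
      (Uop (kLp (conj z))) := by
  have hz' : ‖conj z‖ < 1 := by rwa [RCLike.norm_conj]
  have hk := hasSum_kLp (conj z) hz'
  have hmap := hk.map UopM UopM_continuous
  have heq : (fun j : ℕ =>
        UopM ((((Real.sqrt (1 - ‖conj z‖ ^ 2) : ℝ) : ℂ) * (conj (conj z)) ^ j) • eL (j : ℤ)))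
      = fun j : ℕ => (((Real.sqrt (1 - ‖z‖ ^ 2) : ℝ) : ℂ) * z ^ j) • eL (-1 - (j : ℤ)) := by
    funext j
    rw [UopM_apply, Uop_smul, Uop_eL, RCLike.norm_conj, RCLike.conj_conj]
  have hmap2 : HasSum (fun j : ℕ =>
      UopM ((((Real.sqrt (1 - ‖conj z‖ ^ 2) : ℝ) : ℂ) * (conj (conj z)) ^ j) • eL (j : ℤ)))
      (UopM (kLp (conj z))) := hmap
  rw [heq] at hmap2
  exact hmap2

theorem inner_eL_Uk_nonneg (z : ℂ) (hz : ‖z‖ < 1) (n : ℤ) (hn : 0 ≤ n) :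
    ⟪eL n, Uop (kLp (conj z))⟫ = 0 :=
  inner_eL_hasSum_zero (hasSum_Uk z hz) n (fun j h => by omega)

theorem Uk_mem_orth (z : ℂ) (hz : ‖z‖ < 1) : Uop (kLp (conj z)) ∈ H2ᗮ := by
  apply mem_H2orth
  intro n hn
  rw [← inner_eL]
  exact inner_eL_Uk_nonneg z hz n hn

theorem inner_eL_Uk_neg (z : ℂ) (hz : ‖z‖ < 1) (m : ℤ) (hm : m < 0) :
    ⟪eL m, Uop (kLp (conj z))⟫ = ((Real.sqrt (1 - ‖z‖ ^ 2) : ℝ) : ℂ) * z ^ ((-1 - m).toNat) := by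
  have := inner_eL_hasSum_eq (ι := fun j : ℕ => -1 - (j : ℤ))
    (fun a b h => by
      have h' : (-1 : ℤ) - a = -1 - b := h
      omega) (hasSum_Uk z hz) ((-1 - m).toNat)
  rwa [show (-1 - (((-1 - m).toNat : ℕ) : ℤ)) = m by omega] at this

end Aux19e
section Aux19f

local notation "⟪" x ", " y "⟫" => @inner ℂ _ _ x y

theorem coeFn_kLp (z : ℂ) (hz : ‖z‖ < 1) : kLp z =ᵐ[hm] ⇑(kC z hz) := by
  rw [kLp, dif_pos hz]
  exact ContinuousMap.coeFn_toLp _ _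

theorem conj_fourier_one (x : Circ) : conj (fourier 1 x : ℂ) = fourier (-1) x :=
  fourier_neg.symm

theorem mul_conj_fourier_one (x : Circ) : (fourier 1 x : ℂ) * conj (fourier 1 x) = 1 := by
  rw [conj_fourier_one]; exact fourier_mul_inv x

theorem one_sub_conj_mul_ne (z : ℂ) (hz : ‖z‖ < 1) (x : Circ) :
    (1 : ℂ) - conj z * fourier 1 x ≠ 0 :=
  denom_ne (by rwa [RCLike.norm_conj]) (norm_fourier_one x)

theorem one_sub_mul_conj_ne (z : ℂ) (hz : ‖z‖ < 1) (x : Circ) :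
    (1 : ℂ) - z * conj (fourier 1 x) ≠ 0 := by
  intro hcon
  apply one_sub_conj_mul_ne z hz x
  have := congrArg conj hcon
  simpa [map_sub, map_mul] using this

theorem phiC_apply (z : ℂ) (hz : ‖z‖ < 1) (x : Circ) :
    phiC z hz x = (z - fourier 1 x) / (1 - conj z * fourier 1 x) := rfl

theorem kC_apply (z : ℂ) (hz : ‖z‖ < 1) (x : Circ) :
    kC z hz x = ((Real.sqrt (1 - ‖z‖ ^ 2) : ℝ) : ℂ) / (1 - conj z * fourier 1 x) := rfl

theorem alg_conj_mul (z w : ℂ) (hw : w * conj w = 1) (ne1 : 1 - conj z * w ≠ 0)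
    (ne2 : 1 - z * conj w ≠ 0) :
    conj ((z - w) / (1 - conj z * w)) * ((z - w) / (1 - conj z * w)) = 1 := by
  rw [map_div₀, map_sub, map_sub, map_mul, RCLike.conj_conj, map_one]
  have ne2' : 1 - conj w * z ≠ 0 := by rwa [mul_comm]
  field_simp
  linear_combination (1 - z * conj z) * hw

theorem alg_conjphi_k (z w κ : ℂ) (hw : w * conj w = 1) (ne1 : 1 - conj z * w ≠ 0)
    (ne2 : 1 - z * conj w ≠ 0) :
    conj ((z - w) / (1 - conj z * w)) * (κ / (1 - conj z * w))
      = -(conj w * (κ / (1 - z * conj w))) := by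
  rw [map_div₀, map_sub, map_sub, map_mul, RCLike.conj_conj, map_one]
  have ne2' : 1 - conj w * z ≠ 0 := by rwa [mul_comm]
  field_simp
  linear_combination (-(conj z * κ)) * hw

theorem phiC_conj_mul (z : ℂ) (hz : ‖z‖ < 1) (x : Circ) :
    conj (phiC z hz x) * phiC z hz x = 1 :=
  alg_conj_mul z (fourier 1 x) (mul_conj_fourier_one x) (one_sub_conj_mul_ne z hz x)
    (one_sub_mul_conj_ne z hz x)

theorem mulFun_conjphi_phi (z : ℂ) (hz : ‖z‖ < 1) (h : L2) :
    mulFun (conjLp (phiInf z)) (mulFun (phiInf z) h) = h := by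
  apply Lp.ext
  filter_upwards [coeFn_mulFun (conjLp (phiInf z)) (mulFun (phiInf z) h),
    coeFn_mulFun (phiInf z) h, coeFn_conjLp' (phiInf z), coeFn_phiInf z hz] with x h1 h2 h3 h4
  rw [h1, smul_eq_mul, Pi.mul_apply, h3, h4, h2, smul_eq_mul, Pi.mul_apply, h4,
    ← mul_assoc, phiC_conj_mul z hz, one_mul]

theorem mulFun_conjphi_kLp (z : ℂ) (hz : ‖z‖ < 1) :
    mulFun (conjLp (phiInf z)) (kLp z) = -(Uop (kLp (conj z))) := by
  have hz' : ‖conj z‖ < 1 := by rwa [RCLike.norm_conj]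
  apply Lp.ext
  filter_upwards [coeFn_mulFun (conjLp (phiInf z)) (kLp z), coeFn_conjLp' (phiInf z),
    coeFn_phiInf z hz, coeFn_kLp z hz, coeFn_Uop (kLp (conj z)),
    ae_neg (coeFn_kLp (conj z) hz'), Lp.coeFn_neg (Uop (kLp (conj z)))] with x h1 h2 h3 h4 h5 h6 h7
  rw [h7, Pi.neg_apply, h5, h6, h1, smul_eq_mul, Pi.mul_apply, h2, h3, h4]
  have e1 : kC (conj z) hz' (-x) = ((Real.sqrt (1 - ‖z‖ ^ 2) : ℝ) : ℂ)
      / (1 - z * conj (fourier 1 x)) := by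
    rw [kC_apply, RCLike.norm_conj, RCLike.conj_conj]
    congr 3
    rw [fourier_neg_eq]
    exact (conj_fourier_one x).symm
  have e2 : (fourier (-1) x : ℂ) = conj (fourier 1 x) := (conj_fourier_one x).symm
  rw [e1, e2]
  exact alg_conjphi_k z (fourier 1 x) _ (mul_conj_fourier_one x) (one_sub_conj_mul_ne z hz x)
    (one_sub_mul_conj_ne z hz x)

end Aux19f
section Aux19g

local notation "⟪" x ", " y "⟫" => @inner ℂ _ _ x y

theorem inner_mulFun_right (f : Linf) (x y : L2) :
    ⟪x, mulFun f y⟫ = ⟪mulFun (conjLp f) x, y⟫ := by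
  rw [inner_L2, inner_L2]
  apply integral_congr_ae
  filter_upwards [coeFn_mulFun f y, coeFn_mulFun (conjLp f) x,
    coeFn_conjLp' f] with a h1 h2 h3
  rw [h1, h2, smul_eq_mul, Pi.mul_apply, smul_eq_mul, Pi.mul_apply, h3, map_mul,
    RCLike.conj_conj]
  ring

theorem kappa_sq (z : ℂ) (hz : ‖z‖ < 1) :
    ((Real.sqrt (1 - ‖z‖ ^ 2) : ℝ) : ℂ) * ((Real.sqrt (1 - ‖z‖ ^ 2) : ℝ) : ℂ)
      = ((1 - ‖z‖ ^ 2 : ℝ) : ℂ) := by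
  norm_cast
  apply Real.mul_self_sqrt
  nlinarith [norm_nonneg z]

theorem inner_eL_mulFun_conjphi (z : ℂ) (hz : ‖z‖ < 1) (m n : ℤ) :
    ⟪eL m, mulFun (conjLp (phiInf z)) (eL n)⟫ = conj ⟪eL (n - m), pL2 z hz⟫ := by
  rw [inner_L2, inner_L2, ← integral_conj]
  apply integral_congr_ae
  filter_upwards [coeFn_mulFun (conjLp (phiInf z)) (eL n), coeFn_conjLp' (phiInf z),
    coeFn_phiInf z hz, coeFn_pL2 z hz, coeFn_fourierLp (T := 2 * Real.pi) 2 m,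
    coeFn_fourierLp (T := 2 * Real.pi) 2 n,
    coeFn_fourierLp (T := 2 * Real.pi) 2 (n - m)] with x h1 h2 h3 h4 h5 h6 h7
  rw [h1, smul_eq_mul, Pi.mul_apply, h2, h3, h4, h5, h6, h7, map_mul, RCLike.conj_conj]
  have e1 : conj (fourier m x : ℂ) = fourier (-m) x := fourier_neg.symm
  have e2 : (fourier (n - m) x : ℂ) = fourier n x * fourier (-m) x := by
    rw [show n - m = n + -m by ring, fourier_add]
  rw [e1, e2]
  ring

theorem pn_mem (z : ℂ) (hz : ‖z‖ < 1) (n : ℤ) (hn : 0 ≤ n) :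
    mulFun (conjLp (phiInf z)) (eL n)
      + (((Real.sqrt (1 - ‖z‖ ^ 2) : ℝ) : ℂ) * z ^ n.toNat) • Uop (kLp (conj z)) ∈ H2 := by
  rw [mem_H2_iff]
  intro m hm
  rw [← inner_eL, inner_add_right, inner_smul_right, inner_eL_mulFun_conjphi z hz m n,
    inner_eL_Uk_neg z hz m hm, inner_eL_pL2 z hz (n - m) (by omega)]
  rw [map_mul, map_neg, Complex.conj_ofReal, map_pow, RCLike.conj_conj]
  have hexp : (n - m - 1).toNat = n.toNat + (-1 - m).toNat := by omega
  rw [hexp, pow_add]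
  linear_combination (z ^ n.toNat * z ^ ((-1 - m).toNat)) * kappa_sq z hz

theorem phi_h_add_mem (z : ℂ) (hz : ‖z‖ < 1) (h : L2) (hh : h ∈ H2ᗮ) :
    mulFun (phiInf z) h + ⟪Uop (kLp (conj z)), h⟫ • kLp z ∈ H2ᗮ := by
  apply mem_H2orth
  intro n hn
  rw [← inner_eL, inner_add_right, inner_smul_right]
  have key : ⟪eL n, mulFun (phiInf z) h⟫
      = -((((Real.sqrt (1 - ‖z‖ ^ 2) : ℝ) : ℂ) * (conj z) ^ n.toNat)
          * ⟪Uop (kLp (conj z)), h⟫) := by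
    rw [inner_mulFun_right]
    have hdecomp : mulFun (conjLp (phiInf z)) (eL n)
        = (mulFun (conjLp (phiInf z)) (eL n)
            + (((Real.sqrt (1 - ‖z‖ ^ 2) : ℝ) : ℂ) * z ^ n.toNat) • Uop (kLp (conj z)))
          - (((Real.sqrt (1 - ‖z‖ ^ 2) : ℝ) : ℂ) * z ^ n.toNat) • Uop (kLp (conj z)) := by
      rw [add_sub_cancel_right]
    rw [hdecomp, inner_sub_left, inner_smul_left,
      Submodule.inner_right_of_mem_orthogonal (pn_mem z hz n hn) hh, zero_sub,
      map_mul, Complex.conj_ofReal, map_pow]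
  have hkn : ⟪eL n, kLp z⟫ = ((Real.sqrt (1 - ‖z‖ ^ 2) : ℝ) : ℂ) * (conj z) ^ n.toNat := by
    have := inner_eL_kLp z hz n.toNat
    rwa [show ((n.toNat : ℕ) : ℤ) = n by omega] at this
  rw [key, hkn]
  ring

theorem Pp_mulFun_phi (z : ℂ) (hz : ‖z‖ < 1) (h : L2) (hh : h ∈ H2ᗮ) :
    Pp (mulFun (phiInf z) h) = -(⟪Uop (kLp (conj z)), h⟫ • kLp z) := by
  apply Pp_eq
  · exact Submodule.neg_mem _ (Submodule.smul_mem _ _ (kLp_mem_H2 z hz))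
  · rw [sub_neg_eq_add]
    exact phi_h_add_mem z hz h hh

theorem rankOne_apply (x y h : L2) : rankOne x y h = ⟪y, h⟫ • x := rfl

end Aux19g

/-- For every `z ∈ 𝔻`, on `[H²]^⊥` one has
`S_{φ_z}* S_{φ_z} = I − (U k_{z̄}) ⊗ (U k_{z̄})`, where `S_φ* = S_{φ̄}`. -/
theorem statement_19 (z : ℂ) (hz : ‖z‖ < 1) :
    ContinuousLinearMap.adjoint (sop (phiInf z)) = sop (conjLp (phiInf z)) ∧
    ∀ h : L2, Pp h = 0 →
      sop (conjLp (phiInf z)) (sop (phiInf z) h)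
        = h - rankOne (Uop (kLp (conj z))) (Uop (kLp (conj z))) h := by
  constructor
  · exact adjoint_sop (phiInf z)
  · intro h hPh
    have hh : h ∈ H2ᗮ := mem_orth_of_Pp_eq_zero hPh
    set c : ℂ := @inner ℂ _ _ (Uop (kLp (conj z))) h with hc
    have s1 : sop (phiInf z) h = mulFun (phiInf z) h + c • kLp z := by
      show Qm (mulCL (phiInf z) (Qm h)) = _
      rw [Qm_apply h, hPh, sub_zero, mulCL_apply, Qm_apply, Pp_mulFun_phi z hz h hh,
        sub_neg_eq_add]
    have hv : mulFun (phiInf z) h + c • kLp z ∈ H2ᗮ := phi_h_add_mem z hz h hh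
    have s2 : mulFun (conjLp (phiInf z)) (mulFun (phiInf z) h + c • kLp z)
        = h - c • Uop (kLp (conj z)) := by
      rw [mulFun_add, mulFun_smul, mulFun_conjphi_phi z hz, mulFun_conjphi_kLp z hz,
        smul_neg, ← sub_eq_add_neg]
    show Qm (mulCL (conjLp (phiInf z)) (Qm (sop (phiInf z) h))) = _
    rw [s1]
    have hq : Qm (mulFun (phiInf z) h + c • kLp z) = mulFun (phiInf z) h + c • kLp z := by
      rw [Qm_apply, Pp_of_orth hv, sub_zero]
    rw [hq, mulCL_apply, s2, Qm_apply, map_sub, _root_.map_smul, hPh, Pp_of_orth (Uk_mem_orth z hz),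
      smul_zero, sub_zero, sub_zero, rankOne_apply, ← hc]

end HTTO
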